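/- Let (Ω, μ) be a measure space, C₁ > 0, and let g_s, g_t : Ω → ℝ be measurable functions with g_s(x) ≥ C₁ for a.e. x and d := ess sup_{x∈Ω} |g_t(x) − g_s(x)| ≤ C₁. Let σ_s, σ_t, τ ∈ L²(Ω; ℝ^{3×3}) and assume (1/2)|(τ(x) + σ_s(x))^D|² ≤ g_s(x) for a.e. x ∈ Ω. Define τ_* := (1 − d/C₁)·(τ + σ_s) − σ_t. Then (1/2)|(τ_*(x) + σ_t(x))^D|² ≤ g_t(x) for a.e. x ∈ Ω, and ‖τ_* − τ‖_{L²} ≤ (d/C₁)·(‖τ‖_{L²} + ‖σ_s‖_{L²}) + ‖σ_t − σ_s‖_{L²}. -/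

import Mathlib

open MeasureTheory ENNReal

/-- 3×3 real matrices with the Frobenius (Euclidean) norm. -/
noncomputable abbrev Mat : Type := EuclideanSpace ℝ (Fin 3 × Fin 3)

/-- The deviator `τ^D = τ − (1/3)(tr τ)·I₃`. -/
noncomputable def matDev (τ : Mat) : Mat :=
  WithLp.toLp 2 (fun p => τ p - (∑ k : Fin 3, τ (k, k)) / 3 * (if p.1 = p.2 then 1 else 0))

lemma matDev_smul (c : ℝ) (v : Mat) : matDev (c • v) = c • matDev v := by
  ext p
  simp only [matDev, PiLp.toLp_apply, PiLp.smul_apply, smul_eq_mul, ← Finset.mul_sum]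
  ring

/-- The quantitative core of Lemma 4.1: for `d = ess sup |g_t − g_s| ≤ C₁` and
`τ` in the translated constraint set at time `s`, the element
`τ_* = (1 − d/C₁)(τ + σ_s) − σ_t` lies in the constraint set at time `t` and
`‖τ_* − τ‖_{L²} ≤ (d/C₁)(‖τ‖_{L²} + ‖σ_s‖_{L²}) + ‖σ_t − σ_s‖_{L²}`. -/
theorem constraint_transport {Ω : Type*} [MeasurableSpace Ω] (μ : Measure Ω)
    (C₁ : ℝ) (hC₁ : 0 < C₁) (g_s g_t : Ω → ℝ)
    (hgs : Measurable g_s) (hgt : Measurable g_t)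
    (hgsC : ∀ᵐ x ∂μ, C₁ ≤ g_s x)
    (d : ℝ) (hd0 : 0 ≤ d)
    (hdess : ENNReal.ofReal d = essSup (fun x => ENNReal.ofReal |g_t x - g_s x|) μ)
    (hdC : d ≤ C₁)
    (σ_s σ_t τ : Ω → Mat)
    (hσs : MemLp σ_s 2 μ) (hσt : MemLp σ_t 2 μ) (hτ : MemLp τ 2 μ)
    (hcon : ∀ᵐ x ∂μ, 1 / 2 * ‖matDev (τ x + σ_s x)‖ ^ 2 ≤ g_s x) :
    (∀ᵐ x ∂μ,
        1 / 2 * ‖matDev ((((1 - d / C₁) • (τ + σ_s) - σ_t) : Ω → Mat) x + σ_t x)‖ ^ 2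
          ≤ g_t x) ∧
      eLpNorm (((1 - d / C₁) • (τ + σ_s) - σ_t) - τ) 2 μ ≤
        ENNReal.ofReal (d / C₁) * (eLpNorm τ 2 μ + eLpNorm σ_s 2 μ) +
          eLpNorm (σ_t - σ_s) 2 μ := by
  have hc0 : 0 ≤ d / C₁ := div_nonneg hd0 hC₁.le
  have hc1 : d / C₁ ≤ 1 := (div_le_one hC₁).mpr hdC
  have hbd : ∀ᵐ x ∂μ, |g_t x - g_s x| ≤ d := by
    have := _root_.ae_le_essSup (f := fun x => ENNReal.ofReal |g_t x - g_s x|) (μ := μ)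
    rw [← hdess] at this
    filter_upwards [this] with x hx
    exact (ENNReal.ofReal_le_ofReal_iff hd0).mp hx
  constructor
  · filter_upwards [hbd, hgsC, hcon] with x hx hCx hcx
    have hpt : (((1 - d / C₁) • (τ + σ_s) - σ_t) : Ω → Mat) x + σ_t x
        = (1 - d / C₁) • (τ x + σ_s x) := by
      simp [Pi.smul_apply, Pi.sub_apply, Pi.add_apply, sub_add_cancel]
    rw [hpt, matDev_smul, norm_smul, Real.norm_eq_abs, mul_pow, sq_abs]
    have hN : (0:ℝ) ≤ ‖matDev (τ x + σ_s x)‖ ^ 2 := by positivity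
    have hgd : d * C₁ ≤ d * g_s x := mul_le_mul_of_nonneg_left hCx hd0
    have habs : g_s x - d ≤ g_t x := by
      have := abs_le.mp hx
      linarith [this.1, this.2]
    have hcsq : (1 - d / C₁) ^ 2 ≤ 1 - d / C₁ := by nlinarith
    have h1 : (1 - d / C₁) * g_s x ≤ g_t x := by
      have : d ≤ (d / C₁) * g_s x := by
        rw [div_mul_eq_mul_div, le_div_iff₀ hC₁]
        linarith
      nlinarith
    calc 1 / 2 * ((1 - d / C₁) ^ 2 * ‖matDev (τ x + σ_s x)‖ ^ 2)
        ≤ 1 / 2 * ((1 - d / C₁) * ‖matDev (τ x + σ_s x)‖ ^ 2) := by nlinarith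
      _ = (1 - d / C₁) * (1 / 2 * ‖matDev (τ x + σ_s x)‖ ^ 2) := by ring
      _ ≤ (1 - d / C₁) * g_s x := by nlinarith
      _ ≤ g_t x := h1
  · have heq : (((1 - d / C₁) • (τ + σ_s) - σ_t) - τ)
        = -((d / C₁) • (τ + σ_s) + (σ_t - σ_s)) := by
      funext x
      simp only [Pi.sub_apply, Pi.add_apply, Pi.smul_apply, Pi.neg_apply]
      module
    rw [heq, eLpNorm_neg]
    have hts : MemLp (τ + σ_s) 2 μ := hτ.add hσs
    have h1 := eLpNorm_add_le (μ := μ) (p := 2)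
      (hts.const_smul (d / C₁)).aestronglyMeasurable
      (hσt.sub hσs).aestronglyMeasurable one_le_two
    refine h1.trans ?_
    gcongr
    have h2 : eLpNorm ((d / C₁) • (τ + σ_s)) 2 μ
        = ENNReal.ofReal (d / C₁) * eLpNorm (τ + σ_s) 2 μ := by
      rw [eLpNorm_const_smul]
      congr 1
      exact Real.enorm_eq_ofReal hc0
    rw [h2]
    gcongr
    exact eLpNorm_add_le hτ.aestronglyMeasurable hσs.aestronglyMeasurable one_le_two
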